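/- arXiv:2404.02253 — 3 statements merged into one kernel-verified Lean document; each statement's English description precedes it below -/
import Mathlib

section
/- Let R be a commutative ring and x_0, x_1, …, x_k ∈ R (k ≥ 1). Define, for 0 ≤ n, χ_n = Σ_{s=0}^{n} ∏_{t=0}^{s−1} x_t and χ'_n = Σ_{s=0}^{n} ∏_{t=1}^{s} x_t (empty products equal 1). Then χ_k · χ'_k = χ_{k+1} · χ'_{k−1} + ∏_{t=1}^{k} x_t. -/
lemma prod_range_succ_eq_Icc {R : Type*} [CommRing R] (k : ℕ) (x : ℕ → R) :
    (∏ t ∈ Finset.range (k + 1), x t) = x 0 * ∏ t ∈ Finset.Icc 1 k, x t := by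
  rw [Finset.prod_range_succ', ← Finset.Ico_add_one_right_eq_Icc, Finset.prod_Ico_eq_prod_range]
  simp [mul_comm, add_comm]

lemma chi_eq {R : Type*} [CommRing R] (k : ℕ) (x : ℕ → R) :
    (∑ s ∈ Finset.range (k + 1), ∏ t ∈ Finset.range s, x t) =
      1 + x 0 * ∑ s ∈ Finset.range k, ∏ t ∈ Finset.Icc 1 s, x t := by
  induction k with
  | zero => simp
  | succ n ih =>
      rw [Finset.sum_range_succ, ih, Finset.sum_range_succ,
        prod_range_succ_eq_Icc]
      ring

/-- Combinatorial core of the inflated `T`-system of type A₁: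
with `χ_n = ∑_{s=0}^n ∏_{t=0}^{s-1} x_t` and `χ'_n = ∑_{s=0}^n ∏_{t=1}^s x_t`,
one has `χ_k χ'_k = χ_{k+1} χ'_{k-1} + ∏_{t=1}^k x_t`. -/
theorem stmt9 {R : Type*} [CommRing R] (k : ℕ) (hk : 1 ≤ k) (x : ℕ → R) :
    (∑ s ∈ Finset.range (k + 1), ∏ t ∈ Finset.range s, x t) *
      (∑ s ∈ Finset.range (k + 1), ∏ t ∈ Finset.Icc 1 s, x t) =
    (∑ s ∈ Finset.range (k + 2), ∏ t ∈ Finset.range s, x t) *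
      (∑ s ∈ Finset.range k, ∏ t ∈ Finset.Icc 1 s, x t) +
    ∏ t ∈ Finset.Icc 1 k, x t := by
  obtain ⟨m, rfl⟩ : ∃ m, k = m + 1 := ⟨k - 1, (Nat.succ_pred_eq_of_pos hk).symm⟩
  rw [chi_eq (m + 1) x, chi_eq (m + 2) x,
    Finset.sum_range_succ (f := fun s => ∏ t ∈ Finset.Icc 1 s, x t) (n := m + 1)]
  ring
end

section
/- Let q, a ∈ ℂˣ with q not a root of unity, and let V be a ℂ-vector space with basis {v_m}_{m≥0} (set v_{−1} = 0). Define linear operators X_r⁺ and X_r⁻ (r ∈ ℤ) by X_r⁺ v_m = a^r q^{2r(1−m)} v_{m−1} and (q − q^{-1}) X_r⁻ v_m = a^r q^{-(2r+1)m}[m+1]_q v_{m+1}, where [n]_q = (qⁿ−q^{-n})/(q−q^{-1}). Then for all r, s ∈ ℤ and m ≥ 0: (q − q^{-1})(X_r⁺ X_s⁻ − X_s⁻ X_r⁺) v_m = a^{r+s} q^{-m(2(r+s)+1)} ([m+1]_q − q^{2(r+s)+1}[m]_q) v_m. -/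
/-- The commutator relation `(q - q⁻¹)[x_r⁺, x_s⁻] v_m = (φ⁺ - φ⁻)-eigenvalue ⬝ v_m`
on the negative prefundamental representation `L(Ψ_{1,a}⁻¹)` of `U_q^{-ω∨}(sl₂)`. -/
theorem stmt11 (q a : ℂ) (hq : q ≠ 0) (ha : a ≠ 0)
    (hq' : ∀ n : ℕ, 0 < n → q ^ n ≠ 1)
    (Xp Xm : ℤ → ((ℕ →₀ ℂ) →ₗ[ℂ] (ℕ →₀ ℂ)))
    (hXp0 : ∀ r : ℤ, Xp r (Finsupp.single 0 1) = 0)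
    (hXp : ∀ r : ℤ, ∀ m : ℕ,
      Xp r (Finsupp.single (m + 1) 1) =
        (a ^ r * q ^ (2 * r * (1 - ((m : ℤ) + 1)))) • Finsupp.single m 1)
    (hXm : ∀ r : ℤ, ∀ m : ℕ,
      (q - q⁻¹) • Xm r (Finsupp.single m 1) =
        (a ^ r * q ^ (-(2 * r + 1) * (m : ℤ)) *
          ((q ^ (m + 1) - q⁻¹ ^ (m + 1)) / (q - q⁻¹))) •
          Finsupp.single (m + 1) 1) :
    ∀ r s : ℤ, ∀ m : ℕ,
      (q - q⁻¹) •
          (Xp r (Xm s (Finsupp.single m 1)) - Xm s (Xp r (Finsupp.single m 1))) =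
        (a ^ (r + s) * q ^ (-(m : ℤ) * (2 * (r + s) + 1)) *
            (((q ^ (m + 1) - q⁻¹ ^ (m + 1)) / (q - q⁻¹)) -
              q ^ (2 * (r + s) + 1) * ((q ^ m - q⁻¹ ^ m) / (q - q⁻¹)))) •
          Finsupp.single m 1 := by
  have hK : q - q⁻¹ ≠ 0 := by
    intro h
    apply hq' 2 (by norm_num)
    have h1 : q = q⁻¹ := sub_eq_zero.mp h
    rw [sq]
    nth_rewrite 2 [h1]
    exact mul_inv_cancel₀ hq
  intro r s m
  have t1 : (q - q⁻¹) • Xp r (Xm s (Finsupp.single m 1)) =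
      ((a ^ s * q ^ (-(2 * s + 1) * (m : ℤ)) *
          ((q ^ (m + 1) - q⁻¹ ^ (m + 1)) / (q - q⁻¹))) *
        (a ^ r * q ^ (2 * r * (1 - ((m : ℤ) + 1))))) • Finsupp.single m 1 := by
    rw [← map_smul, hXm s m, map_smul, hXp r m, smul_smul]
  cases m with
  | zero =>
      rw [smul_sub, t1, hXp0, map_zero, smul_zero, sub_zero]
      congr 1
      simp [zpow_add₀ ha]
      ring
  | succ k =>
      have t2 : (q - q⁻¹) • Xm s (Xp r (Finsupp.single (k + 1) 1)) =
          ((a ^ r * q ^ (2 * r * (1 - ((k : ℤ) + 1)))) *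
            (a ^ s * q ^ (-(2 * s + 1) * (k : ℤ)) *
              ((q ^ (k + 1) - q⁻¹ ^ (k + 1)) / (q - q⁻¹)))) •
            Finsupp.single (k + 1) 1 := by
        rw [hXp r k, map_smul, smul_comm, hXm s k, smul_smul]
      rw [smul_sub, t1, t2, ← sub_smul]
      congr 1
      push_cast
      have e1 : q ^ (-(2 * s + 1) * ((k:ℤ)+1)) * q ^ (2 * r * (1 - (((k:ℤ)+1) + 1)))
          = q ^ (-((k:ℤ)+1) * (2 * (r + s) + 1)) := by
        rw [← zpow_add₀ hq]; congr 1; ring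
      have e2 : q ^ (2 * r * (1 - ((k:ℤ) + 1))) * q ^ (-(2 * s + 1) * (k:ℤ))
          = q ^ (-((k:ℤ)+1) * (2 * (r + s) + 1)) * q ^ (2 * (r + s) + 1) := by
        rw [← zpow_add₀ hq, ← zpow_add₀ hq]; congr 1; ring
      have e3 : a ^ (r + s) = a ^ r * a ^ s := zpow_add₀ ha r s
      rw [e3]
      linear_combination (a^r * a^s * ((q ^ (k + 1 + 1) - q⁻¹ ^ (k + 1 + 1)) / (q - q⁻¹))) * e1 -
        (a^r * a^s * ((q ^ (k + 1) - q⁻¹ ^ (k + 1)) / (q - q⁻¹))) * e2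
end

section
/- Let q, a ∈ ℂˣ with q ≠ 0, and let V be a ℂ-vector space with basis {v_m}_{m≥0}. Define linear operators X_r (r ∈ ℤ) by X_r v_m = a^r q^{-(2r+1)m}[m+1]_q v_{m+1}, where [n]_q = (qⁿ−q^{-n})/(q−q^{-1}). Then for all r, s ∈ ℤ: X_{r+1} X_s − q^{-2} X_s X_{r+1} = q^{-2} X_r X_{s+1} − X_{s+1} X_r as linear operators on V. -/
/-- The quadratic Drinfeld relation for the lowering operators `x_{1,r}⁻` on the
negative prefundamental representation `L(Ψ_{1,a}⁻¹)` of `U_q^{-ω∨}(sl₂)`. -/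
theorem stmt12 (q a : ℂ) (hq : q ≠ 0) (ha : a ≠ 0)
    (X : ℤ → ((ℕ →₀ ℂ) →ₗ[ℂ] (ℕ →₀ ℂ)))
    (hX : ∀ r : ℤ, ∀ m : ℕ,
      X r (Finsupp.single m 1) =
        (a ^ r * q ^ (-(2 * r + 1) * (m : ℤ)) *
          ((q ^ (m + 1) - q⁻¹ ^ (m + 1)) / (q - q⁻¹))) •
          Finsupp.single (m + 1) 1) :
    ∀ r s : ℤ,
      X (r + 1) ∘ₗ X s - q⁻¹ ^ 2 • (X s ∘ₗ X (r + 1)) =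
        q⁻¹ ^ 2 • (X r ∘ₗ X (s + 1)) - X (s + 1) ∘ₗ X r := by
  intro r s
  apply Finsupp.lhom_ext
  intro m b
  have hb : (Finsupp.single m b : ℕ →₀ ℂ) = b • Finsupp.single m 1 := by
    simp [Finsupp.smul_single]
  simp only [hb, map_smul, LinearMap.sub_apply, LinearMap.smul_apply,
    LinearMap.comp_apply, hX, map_smul, smul_smul]
  rw [← sub_smul, ← sub_smul]
  refine congrArg (fun c : ℂ => b • (c • (Finsupp.single (m+1+1) (1:ℂ)))) ?_
  have h2 : q⁻¹ ^ 2 = q ^ (-2 : ℤ) := by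
    rw [zpow_neg, inv_pow]; norm_cast
  have L : ∀ (i e j f : ℤ) (B C : ℂ),
      (a ^ i * q ^ e * B) * (a ^ j * q ^ f * C) = a ^ (i + j) * q ^ (e + f) * (B * C) := by
    intros i e j f B C
    rw [zpow_add₀ ha, zpow_add₀ hq]; ring
  have L2 : ∀ (i f : ℤ) (B : ℂ),
      q ^ (-2 : ℤ) * (a ^ i * q ^ f * B) = a ^ i * q ^ (-2 + f) * B := by
    intros i f B
    rw [zpow_add₀ hq]; ring
  rw [h2, L, L, L, L, L2, L2]
  have fin : ∀ (i1 i2 i3 i4 e1 e2 e3 e4 : ℤ) (B : ℂ),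
      i1 = i3 → i2 = i4 → e1 = e3 → e2 = e4 →
      a ^ i1 * q ^ e1 * B - a ^ i2 * q ^ e2 * B =
        a ^ i3 * q ^ e3 * B - a ^ i4 * q ^ e4 * B := by
    intros i1 i2 i3 i4 e1 e2 e3 e4 B h1 h2 h3 h4
    rw [h1, h2, h3, h4]
  exact fin _ _ _ _ _ _ _ _ _ (by ring) (by ring)
    (by push_cast; ring) (by push_cast; ring)
end
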